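/- Let f ∈ R be nonzero with ev_z(f) ≠ 0 for every z ∈ (S¹)^d. Then the limit as n → ∞ of n^{-d} · Σ_ω log|ev_ω(f)|, the sum taken over all d-tuples ω ∈ (μ_n)^d of n-th roots of unity, exists and equals the logarithmic Mahler measure m(f) = ∫₀¹…∫₀¹ log|f(e^{2πis₁},…,e^{2πis_d})| ds₁…ds_d. -/

import Mathlib

/-!
Because `f` has no zeros on the torus, `G s = log ‖f(e^{2πis₁}, …, e^{2πis_d})‖` is continuous on
`[0,1]^d`, and the roots-of-unity averages are the Riemann sums of `G` on the grid `(1/N)ℕ^d`.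
Each Riemann sum is the integral of `G` composed with rounding every coordinate down to the grid;
these functions converge pointwise to `G` and are bounded by `sup |G|` on the cube, so dominated
convergence gives the limit `∫ G = m(f)`.
-/

noncomputable section

open MeasureTheory

/-- The ring `R = ℤ[u₁^{±1},…,u_d^{±1}]`, realized as the group algebra of `ℤ^d` over `ℤ`. -/
abbrev LaurentR (d : ℕ) : Type := AddMonoidAlgebra ℤ (Fin d → ℤ)

/-- Evaluation of a Laurent polynomial `f ∈ R` at a point `z ∈ (ℂ∖{0})^d`:
the ring homomorphism sending `uᵢ` to `zᵢ`. -/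
def ev {d : ℕ} (z : Fin d → ℂ) (f : LaurentR d) : ℂ :=
  Finsupp.sum f.coeff fun m c => (c : ℂ) * ∏ i, z i ^ (m i)

/-- The logarithmic Mahler measure
`m(f) = ∫_{[0,1]^d} log |f(e^{2πis₁},…,e^{2πis_d})| ds`. -/
def mahlerMeasure {d : ℕ} (f : LaurentR d) : ℝ :=
  ∫ s in (Set.univ.pi fun _ : Fin d => Set.Icc (0 : ℝ) 1),
    Real.log ‖
      (ev (fun i => Complex.exp (2 * Real.pi * Complex.I * (s i : ℂ))) f)‖

open Filter Topology

namespace RiemannSum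

variable {d : ℕ}

def gridBox (N : ℕ) (j : Fin d → Fin N) : Set (Fin d → ℝ) :=
  Set.univ.pi fun i => Set.Ico ((j i : ℝ) / N) ((j i + 1 : ℝ) / N)

def gridFloor (N : ℕ) (s : Fin d → ℝ) : Fin d → ℝ :=
  fun i => (⌊s i * N⌋₊ : ℝ) / N

lemma mem_Ico_div_iff {N : ℕ} (hN : 0 < N) (k : ℕ) (x : ℝ) :
    x ∈ Set.Ico ((k : ℝ) / N) ((k + 1 : ℝ) / N) ↔ 0 ≤ x ∧ ⌊x * N⌋₊ = k := by
  have hN' : (0 : ℝ) < N := by exact_mod_cast hN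
  rw [Set.mem_Ico, div_le_iff₀ hN', lt_div_iff₀ hN']
  constructor
  · rintro ⟨hk, hk'⟩
    have hx : 0 ≤ x := nonneg_of_mul_nonneg_left ((Nat.cast_nonneg k).trans hk) hN'
    exact ⟨hx, (Nat.floor_eq_iff (by positivity)).2 ⟨hk, hk'⟩⟩
  · rintro ⟨hx, hk⟩
    exact (Nat.floor_eq_iff (by positivity)).1 hk

lemma mem_gridBox_iff {N : ℕ} (hN : 0 < N) (j : Fin d → Fin N) (s : Fin d → ℝ) :
    s ∈ gridBox N j ↔ ∀ i, 0 ≤ s i ∧ ⌊s i * N⌋₊ = j i := by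
  simp only [gridBox, Set.mem_univ_pi, mem_Ico_div_iff hN]

lemma measurableSet_gridBox (N : ℕ) (j : Fin d → Fin N) : MeasurableSet (gridBox N j) :=
  MeasurableSet.univ_pi fun _ => measurableSet_Ico

lemma measureReal_gridBox (N : ℕ) (j : Fin d → Fin N) :
    volume.real (gridBox N j) = (1 / (N : ℝ)) ^ d := by
  rw [measureReal_def, gridBox, Real.volume_pi_Ico_toReal fun i => by gcongr; linarith]
  simp [← sub_div]

lemma pairwise_disjoint_gridBox (N : ℕ) :
    Pairwise (Function.onFun Disjoint (gridBox (d := d) N)) := by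
  intro j j' hjj'
  refine Set.disjoint_left.2 fun s hs hs' => hjj' (funext fun i => Fin.ext ?_)
  have hN : 0 < N := Fin.pos (j i)
  rw [← ((mem_gridBox_iff hN j s).1 hs i).2, ((mem_gridBox_iff hN j' s).1 hs' i).2]

lemma iUnion_gridBox {N : ℕ} (hN : 0 < N) :
    ⋃ j, gridBox (d := d) N j = Set.univ.pi fun _ => Set.Ico 0 1 := by
  have hN' : (0 : ℝ) < N := by exact_mod_cast hN
  ext s
  simp only [Set.mem_iUnion, mem_gridBox_iff hN, Set.mem_univ_pi, Set.mem_Ico]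
  constructor
  · rintro ⟨j, hj⟩ i
    have h := (hj i).2 ▸ (j i).2
    rw [Nat.floor_lt (by positivity [(hj i).1])] at h
    exact ⟨(hj i).1, (mul_lt_iff_lt_one_left hN').1 h⟩
  · intro hs
    refine ⟨fun i => ⟨⌊s i * N⌋₊, ?_⟩, fun i => ⟨(hs i).1, rfl⟩⟩
    rw [Nat.floor_lt (by positivity [(hs i).1])]
    exact mul_lt_of_lt_one_left hN' (hs i).2

lemma gridFloor_of_mem_gridBox {N : ℕ} {j : Fin d → Fin N} {s : Fin d → ℝ}
    (hs : s ∈ gridBox N j) : gridFloor N s = fun i => (j i : ℝ) / N := by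
  funext i
  rw [gridFloor, ((mem_gridBox_iff (Fin.pos (j i)) j s).1 hs i).2]

lemma measurable_gridFloor (N : ℕ) : Measurable (gridFloor (d := d) N) := by
  unfold gridFloor
  fun_prop

lemma gridFloor_mem_unitCube (N : ℕ) {s : Fin d → ℝ}
    (hs : s ∈ Set.univ.pi fun _ => Set.Icc (0 : ℝ) 1) :
    gridFloor N s ∈ Set.univ.pi fun _ => Set.Icc (0 : ℝ) 1 := by
  intro i _
  obtain ⟨h0, h1⟩ := hs i trivial
  exact ⟨div_nonneg (Nat.cast_nonneg _) N.cast_nonneg,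
    (div_le_of_le_mul₀ N.cast_nonneg h0 (Nat.floor_le (mul_nonneg h0 N.cast_nonneg))).trans h1⟩

lemma tendsto_gridFloor {s : Fin d → ℝ} (hs : 0 ≤ s) :
    Tendsto (fun N => gridFloor N s) atTop (𝓝 s) :=
  tendsto_pi_nhds.2 fun i =>
    (tendsto_nat_floor_mul_div_atTop (hs i)).comp tendsto_natCast_atTop_atTop

lemma setIntegral_comp_gridFloor {N : ℕ} (hN : 0 < N) (G : (Fin d → ℝ) → ℝ) :
    ∫ s in Set.univ.pi (fun _ => Set.Icc (0 : ℝ) 1), G (gridFloor N s) =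
      1 / (N : ℝ) ^ d * ∑ j : Fin d → Fin N, G (fun i => (j i : ℝ) / N) := by
  have hconst : ∀ j, Set.EqOn (fun s => G (gridFloor N s))
      (fun _ => G (fun i => (j i : ℝ) / N)) (gridBox N j) :=
    fun j s hs => congrArg G (gridFloor_of_mem_gridBox hs)
  have hIco : (Set.univ.pi fun _ : Fin d => Set.Ico (0 : ℝ) 1) =ᵐ[volume]
      Set.univ.pi fun _ => Set.Icc 0 1 := Measure.pi_Ico_ae_eq_pi_Icc
  rw [← setIntegral_congr_set hIco, ← iUnion_gridBox hN,
    integral_iUnion_fintype (measurableSet_gridBox N) (pairwise_disjoint_gridBox N),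
    Finset.mul_sum]
  · refine Finset.sum_congr rfl fun j _ => ?_
    rw [setIntegral_congr_fun (measurableSet_gridBox N j) (hconst j), setIntegral_const,
      measureReal_gridBox, smul_eq_mul, one_div_pow]
  · intro j
    have hfin : volume (gridBox N j) ≠ ⊤ := by
      simp [gridBox, Real.volume_pi_Ico, ENNReal.prod_ne_top]
    exact (integrableOn_const hfin).congr_fun (hconst j).symm (measurableSet_gridBox N j)

theorem tendsto_setIntegral_comp_gridFloor {G : (Fin d → ℝ) → ℝ} (hG : Continuous G) :
    Tendsto (fun N => ∫ s in Set.univ.pi (fun _ => Set.Icc (0 : ℝ) 1), G (gridFloor N s))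
      atTop (𝓝 (∫ s in Set.univ.pi (fun _ => Set.Icc (0 : ℝ) 1), G s)) := by
  have hK : IsCompact (Set.univ.pi fun _ : Fin d => Set.Icc (0 : ℝ) 1) :=
    isCompact_univ_pi fun _ => isCompact_Icc
  have hKm : MeasurableSet (Set.univ.pi fun _ : Fin d => Set.Icc (0 : ℝ) 1) :=
    MeasurableSet.univ_pi fun _ => measurableSet_Icc
  obtain ⟨C, hC⟩ := hK.exists_bound_of_continuousOn hG.continuousOn
  refine tendsto_integral_of_dominated_convergence (fun _ => C)
    (fun N => (hG.measurable.comp (measurable_gridFloor N)).aestronglyMeasurable)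
    (integrableOn_const hK.measure_lt_top.ne)
    (fun N => ae_restrict_of_forall_mem hKm fun s hs => hC _ (gridFloor_mem_unitCube N hs))
    (ae_restrict_of_forall_mem hKm fun s hs => ?_)
  exact (hG.tendsto s).comp (tendsto_gridFloor fun i => (hs i trivial).1)

end RiemannSum

open RiemannSum in
theorem tendsto_riemannSum_unitCube {d : ℕ} {G : (Fin d → ℝ) → ℝ} (hG : Continuous G) :
    Tendsto (fun N : ℕ => 1 / (N : ℝ) ^ d * ∑ j : Fin d → Fin N, G (fun i => (j i : ℝ) / N))
      atTop (𝓝 (∫ s in Set.univ.pi (fun _ => Set.Icc (0 : ℝ) 1), G s)) := by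
  refine (tendsto_setIntegral_comp_gridFloor hG).congr' ?_
  filter_upwards [eventually_gt_atTop 0] with N hN using setIntegral_comp_gridFloor hN G

lemma Continuous.ev {X : Type*} [TopologicalSpace X] {d : ℕ} (f : LaurentR d)
    {z : X → Fin d → ℂ} (hz : Continuous z) (hz0 : ∀ x i, z x i ≠ 0) :
    Continuous fun x => ev (z x) f :=
  continuous_finsetSum _ fun m _ => continuous_const.mul <| continuous_finsetProd _ fun i _ =>
    ((continuous_apply i).comp hz).zpow₀ (m i) fun x => Or.inl (hz0 x i)

lemma norm_exp_two_pi_I_mul_ofReal (x : ℝ) :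
    ‖Complex.exp (2 * Real.pi * Complex.I * x)‖ = 1 := by
  rw [show 2 * Real.pi * Complex.I * x = ((2 * Real.pi * x : ℝ) : ℂ) * Complex.I by
    push_cast; ring]
  exact Complex.norm_exp_ofReal_mul_I _

lemma continuous_log_norm_ev_exp {d : ℕ} (f : LaurentR d)
    (hf : ∀ z : Fin d → ℂ, (∀ i, ‖z i‖ = 1) → ev z f ≠ 0) :
    Continuous fun s : Fin d → ℝ =>
      Real.log ‖ev (fun i => Complex.exp (2 * Real.pi * Complex.I * (s i : ℂ))) f‖ := by
  refine ((Continuous.ev f (by fun_prop) fun _ _ => Complex.exp_ne_zero _).norm).log fun s => ?_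
  exact norm_ne_zero_iff.2 (hf _ fun i => norm_exp_two_pi_I_mul_ofReal (s i))

theorem roots_of_unity_averages_tendsto_mahler_measure_general (d : ℕ)
    (f : LaurentR d)
    (hnovanish : ∀ z : Fin d → ℂ, (∀ i, ‖z i‖ = 1) → ev z f ≠ 0) :
    Filter.Tendsto
      (fun N : ℕ => (1 / (N : ℝ) ^ d) *
        ∑ j : Fin d → Fin N,
          Real.log ‖ev (fun i =>
            Complex.exp (2 * Real.pi * Complex.I * ((j i : ℕ) : ℂ) / (N : ℂ))) f‖)
      Filter.atTop (nhds (mahlerMeasure f)) := by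
  have hroot : ∀ (N : ℕ) (k : Fin N), 2 * Real.pi * Complex.I * ((k : ℕ) : ℂ) / (N : ℂ) =
      2 * Real.pi * Complex.I * (((k : ℝ) / N : ℝ) : ℂ) := by
    intro N k
    push_cast
    ring
  simpa only [hroot, mahlerMeasure] using
    tendsto_riemannSum_unitCube (continuous_log_norm_ev_exp f hnovanish)

theorem roots_of_unity_averages_tendsto_mahler_measure (d : ℕ)
    (f : LaurentR d) (hf : f ≠ 0)
    (hnovanish : ∀ z : Fin d → ℂ, (∀ i, ‖z i‖ = 1) → ev z f ≠ 0) :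
    Filter.Tendsto
      (fun N : ℕ => (1 / (N : ℝ) ^ d) *
        ∑ j : Fin d → Fin N,
          Real.log ‖ev (fun i =>
            Complex.exp (2 * Real.pi * Complex.I * ((j i : ℕ) : ℂ) / (N : ℂ))) f‖)
      Filter.atTop (nhds (mahlerMeasure f)) :=
  roots_of_unity_averages_tendsto_mahler_measure_general d f hnovanish
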